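/- The Dirichlet–Minkowski forcing DM is σ-soft-linked; moreover, this is witnessed by the sets M_{s,m} = {(t,F) ∈ DM : t = s and |F| ≤ m} for s ∈ ω^{<ω} and m ∈ ω: each M_{s,m} is leaf-linked, their union is dense in DM, and if (t,F) ∈ M_{s,m} and (t',F') ∈ M_{s',m'} are compatible with s ⊆ s', then they have a common extension in M_{s', m+m'}. -/

import Mathlib

universe u

variable {α : Type u} [Preorder α]

/-- `p` and `q` are compatible: some `r` extends both. -/
def Compat (p q : α) : Prop := ∃ r : α, r ≤ p ∧ r ≤ q

/-- `A` is a maximal antichain: pairwise incompatible, and every condition is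
compatible with a member of `A`. -/
def IsMaxAC (A : Set α) : Prop :=
  (∀ p ∈ A, ∀ q ∈ A, p ≠ q → ¬Compat p q) ∧ ∀ p : α, ∃ q ∈ A, Compat p q

/-- `Q` is leaf-linked: for every maximal antichain enumerated as `{p n : n ∈ ω}`
there is `n` such that every `q ∈ Q` is compatible with some `p j`, `j < n`. -/
def LeafLinked (Q : Set α) : Prop :=
  ∀ p : ℕ → α, IsMaxAC (Set.range p) → ∃ n : ℕ, ∀ q ∈ Q, ∃ j < n, Compat q (p j)

/-- `D` is dense in the preorder. -/
def DenseSub (D : Set α) : Prop := ∀ p : α, ∃ q ∈ D, q ≤ p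

/-- The countable chain condition: every antichain is countable. -/
def CCC (α : Type u) [Preorder α] : Prop :=
  ∀ A : Set α, (∀ p ∈ A, ∀ q ∈ A, p ≠ q → ¬Compat p q) → A.Countable

/-- `P` is σ-soft-linked. -/
def SigmaSoftLinked (α : Type u) [Preorder α] : Prop :=
  ∃ Q : ℕ → Set α, (∀ n, LeafLinked (Q n)) ∧ DenseSub (⋃ n, Q n) ∧
    ∀ n n' : ℕ, ∃ k : ℕ, ∀ p ∈ Q n, ∀ q ∈ Q n',
      Compat p q → ∃ r ∈ Q k, r ≤ p ∧ r ≤ q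

/-- `‖x‖`: the distance from `x` to the nearest integer. -/
noncomputable def nid (x : ℝ) : ℝ := |x - round x|

/-- Conditions of the Dirichlet–Minkowski forcing `DM`: pairs `(s, F)` with
`s ∈ ω^{<ω}` and `F` a finite subset of `[0,1]`. -/
def DMCond : Type :=
  {p : List ℕ × Finset ℝ // ∀ x ∈ p.2, x ∈ Set.Icc (0 : ℝ) 1}

/-- The order of `DM`: `(s,F) ≤ (t,H)` iff `t ⊆ s`, `H ⊆ F`, and
`‖s i · x‖ < 1/(i+1)` for every `i ∈ dom(s) ∖ dom(t)` and every `x ∈ H`. -/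
noncomputable instance : Preorder DMCond where
  le p q := q.1.1 <+: p.1.1 ∧ q.1.2 ⊆ p.1.2 ∧
    ∀ (i : ℕ), q.1.1.length ≤ i → ∀ h2 : i < p.1.1.length, ∀ x ∈ q.1.2,
      nid ((p.1.1[i] : ℝ) * x) < 1 / (i + 1)
  le_refl p :=
    ⟨List.prefix_refl _, subset_rfl, fun i h1 h2 => absurd h1 (by omega)⟩
  le_trans p q r hpq hqr := by
    obtain ⟨h1, h2, h3⟩ := hpq
    obtain ⟨h1', h2', h3'⟩ := hqr
    refine ⟨h1'.trans h1, h2'.trans h2, ?_⟩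
    intro i hi1 hi2 x hx
    by_cases hc : i < q.1.1.length
    · have := h3' i hi1 hc x hx
      rwa [h1.getElem hc] at this
    · exact h3 i (by omega) hi2 x (h2' hx)

/-- The set `M_{s,m} = {(t,F) ∈ DM : t = s and |F| ≤ m}`. -/
def DMSet (s : List ℕ) (m : ℕ) : Set DMCond :=
  {p | p.1.1 = s ∧ p.1.2.card ≤ m}

/-!
The sets `M_{s,m}` cover `DM` since every condition lies in `M_{s,|F|}`, and two compatible
conditions have comparable stems, so the longer stem together with the union of the two
finite sets is a common extension. For leaf-linkedness, suppose the conditions `q_n ∈ M_{s,m}`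
avoid the first `n` members of a maximal antichain. Their at most `m` reals live in the compact
cube `[0,1]^m`, so along a subsequence they converge to a tuple `y`. The condition `(s, y)` is
compatible with some antichain member `p_j`, through some `w`. The requirements
`‖w_i · x‖ < 1/(i+1)` are finitely many strict inequalities in `x`, hence open, so `w` also
constrains the reals of `q_n` for large `n`, making `q_n` compatible with `p_j`: a contradiction.
-/

open Filter Topology

section Compat

variable {p q q' : α}

theorem Compat.symm (h : Compat p q) : Compat q p :=
  let ⟨r, hp, hq⟩ := h
  ⟨r, hq, hp⟩

theorem Compat.mono_right (h : Compat p q) (hq : q ≤ q') : Compat p q' :=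
  let ⟨r, hp, hr⟩ := h
  ⟨r, hp, hr.trans hq⟩

theorem sigmaSoftLinked_of_countable {ι : Type*} [Countable ι] [Nonempty ι] (Q : ι → Set α)
    (hlinked : ∀ i, LeafLinked (Q i)) (hdense : DenseSub (⋃ i, Q i))
    (hjoin : ∀ i i', ∃ k, ∀ p ∈ Q i, ∀ q ∈ Q i', Compat p q → ∃ r ∈ Q k, r ≤ p ∧ r ≤ q) :
    SigmaSoftLinked α := by
  obtain ⟨f, hf⟩ := exists_surjective_nat ι
  refine ⟨Q ∘ f, fun n => hlinked (f n), fun p => ?_, fun n n' => ?_⟩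
  · obtain ⟨q, hq, hqp⟩ := hdense p
    obtain ⟨i, hi⟩ := Set.mem_iUnion.1 hq
    obtain ⟨n, rfl⟩ := hf i
    exact ⟨q, Set.mem_iUnion.2 ⟨n, hi⟩, hqp⟩
  · obtain ⟨k, hk⟩ := hjoin (f n) (f n')
    obtain ⟨n'', rfl⟩ := hf k
    exact ⟨n'', hk⟩

end Compat

theorem exists_tuple_covering_finset {β : Type*} {F : Finset β} {m : ℕ} (hF : F.card ≤ m)
    {S : Set β} (hFS : ↑F ⊆ S) (hS : S.Nonempty) :
    ∃ v : Fin m → β, (∀ k, v k ∈ S) ∧ ∀ x ∈ F, ∃ k, v k = x := by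
  obtain ⟨b, hb⟩ := hS
  refine ⟨fun k => if h : (k : ℕ) < F.card then F.equivFin.symm ⟨k, h⟩ else b,
    fun k => ?_, fun x hx => ⟨Fin.castLE hF (F.equivFin ⟨x, hx⟩), ?_⟩⟩
  · dsimp only
    split_ifs
    exacts [hFS (Finset.coe_mem _), hb]
  · simp

theorem lipschitzWith_nid : LipschitzWith 1 nid :=
  LipschitzWith.of_le_add fun a b =>
    calc nid a ≤ |a - round b| := round_le a (round b)
      _ ≤ nid b + dist a b := by
        rw [nid, Real.dist_eq, add_comm]
        exact abs_sub_le a b (round b)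

/-- What `(t, F) ≤ (t↾n, H)` demands of each `x ∈ H`. -/
def DMApprox (t : List ℕ) (n : ℕ) (x : ℝ) : Prop :=
  ∀ i : Fin t.length, n ≤ i → nid ((t[i] : ℝ) * x) < 1 / (i + 1)

theorem Filter.Tendsto.eventually_DMApprox {ι : Type*} {l : Filter ι} {t : List ℕ} {n : ℕ}
    {u : ι → ℝ} {y : ℝ} (hu : Tendsto u l (𝓝 y)) (hy : DMApprox t n y) :
    ∀ᶠ k in l, DMApprox t n (u k) :=
  eventually_all.2 fun i => eventually_imp_distrib_left.2 fun hi =>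
    ((lipschitzWith_nid.continuous.tendsto _).comp (hu.const_mul _)).eventually_lt_const (hy i hi)

namespace DMCond

theorem le_iff {r q : DMCond} :
    r ≤ q ↔ q.1.1 <+: r.1.1 ∧ q.1.2 ⊆ r.1.2 ∧ ∀ x ∈ q.1.2, DMApprox r.1.1 q.1.1.length x :=
  and_congr_right' <| and_congr_right' ⟨fun h x hx i hi => h i hi i.2 x hx,
    fun h i hi hir x hx => h x hx ⟨i, hir⟩ hi⟩

theorem le_of_stem_eq {r q : DMCond} (hstem : r.1.1 = q.1.1) (hF : q.1.2 ⊆ r.1.2) : r ≤ q :=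
  le_iff.2 ⟨hstem ▸ List.prefix_rfl, hF, fun _ _ i hi => (hi.not_gt (hstem ▸ i.2)).elim⟩

/-- The requirements on the entries of `r`'s stem beyond `p`'s are inherited from `w`. -/
theorem le_of_le_of_prefix {w p r : DMCond} (hwp : w ≤ p) (hpr : p.1.1 <+: r.1.1)
    (hrw : r.1.1 <+: w.1.1) (hF : p.1.2 ⊆ r.1.2) : r ≤ p := by
  refine le_iff.2 ⟨hpr, hF, fun x hx i hi => ?_⟩
  have hiw : (i : ℕ) < w.1.1.length := i.2.trans_le hrw.length_le
  simpa only [Fin.getElem_fin, hrw.getElem i.2] using (le_iff.1 hwp).2.2 x hx ⟨i, hiw⟩ hi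

noncomputable def amalgam (t : List ℕ) (p q : DMCond) : DMCond :=
  ⟨(t, p.1.2 ∪ q.1.2), fun x hx => (Finset.mem_union.1 hx).elim (p.2 x) (q.2 x)⟩

theorem amalgam_le_left (p q : DMCond) : amalgam p.1.1 p q ≤ p :=
  le_of_stem_eq rfl Finset.subset_union_left

theorem compat_of_approx {w q : DMCond} (hstem : q.1.1 <+: w.1.1)
    (happrox : ∀ x ∈ q.1.2, DMApprox w.1.1 q.1.1.length x) : Compat w q :=
  ⟨amalgam w.1.1 w q, amalgam_le_left w q, le_iff.2 ⟨hstem, Finset.subset_union_right, happrox⟩⟩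

theorem stem_prefix_or_prefix_of_compat {p q : DMCond} (h : Compat p q) :
    p.1.1 <+: q.1.1 ∨ q.1.1 <+: p.1.1 :=
  let ⟨_, hrp, hrq⟩ := h
  List.prefix_or_prefix_of_prefix hrp.1 hrq.1

theorem mem_DMSet_self (p : DMCond) : p ∈ DMSet p.1.1 p.1.2.card :=
  ⟨rfl, le_rfl⟩

end DMCond

open DMCond

theorem exists_common_extension_of_prefix {s s' : List ℕ} {m m' : ℕ} (hss' : s <+: s')
    {p q : DMCond} (hp : p ∈ DMSet s m) (hq : q ∈ DMSet s' m') (hpq : Compat p q) :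
    ∃ r ∈ DMSet s' (m + m'), r ≤ p ∧ r ≤ q := by
  obtain ⟨w, hwp, hwq⟩ := hpq
  have hs'w : s' <+: w.1.1 := hq.1 ▸ hwq.1
  refine ⟨amalgam s' p q, ⟨rfl, (Finset.card_union_le _ _).trans (add_le_add hp.2 hq.2)⟩,
    le_of_le_of_prefix hwp (hp.1 ▸ hss') hs'w Finset.subset_union_left,
    le_of_stem_eq hq.1.symm Finset.subset_union_right⟩

theorem exists_DMSet_common_extension (s s' : List ℕ) (m m' : ℕ) :
    ∃ k : List ℕ × ℕ, ∀ p ∈ DMSet s m, ∀ q ∈ DMSet s' m',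
      Compat p q → ∃ r ∈ DMSet k.1 k.2, r ≤ p ∧ r ≤ q := by
  by_cases hss' : s <+: s'
  · exact ⟨(s', m + m'), fun p hp q hq => exists_common_extension_of_prefix hss' hp hq⟩
  · refine ⟨(s, m' + m), fun p hp q hq hpq => ?_⟩
    have hs's : s' <+: s := by
      simpa [hp.1, hq.1, hss'] using stem_prefix_or_prefix_of_compat hpq
    obtain ⟨r, hr, hrq, hrp⟩ := exists_common_extension_of_prefix hs's hq hp hpq.symm
    exact ⟨r, hr, hrp, hrq⟩

theorem leafLinked_DMSet (s : List ℕ) (m : ℕ) : LeafLinked (DMSet s m) := by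
  intro p hp
  by_contra! h
  choose q hq hqp using h
  choose v hv hvq using fun n => exists_tuple_covering_finset (hq n).2 (q n).2 ⟨0, by simp⟩
  obtain ⟨y, hy, φ, hφ, hlim⟩ := (isCompact_univ_pi fun _ : Fin m => isCompact_Icc).tendsto_subseq
    fun n => Set.mem_univ_pi.2 (hv n)
  let Y : DMCond := ⟨(s, Finset.univ.image y), by
    simpa using fun k => Set.mem_univ_pi.1 hy k⟩
  obtain ⟨_, ⟨j, rfl⟩, w, hwY, hwp⟩ := hp.2 Y
  have hwy : ∀ k, DMApprox w.1.1 s.length (y k) := fun k =>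
    (le_iff.1 hwY).2.2 _ (Finset.mem_image_of_mem y (Finset.mem_univ k))
  have hlate : ∀ᶠ n in atTop, ∀ k, DMApprox w.1.1 s.length (v (φ n) k) :=
    eventually_all.2 fun k =>
      ((continuous_apply k).tendsto y |>.comp hlim).eventually_DMApprox (hwy k)
  obtain ⟨n, hn, hjn⟩ := (hlate.and (eventually_gt_atTop j)).exists
  have hs : (q (φ n)).1.1 = s := (hq (φ n)).1
  have hwq : Compat w (q (φ n)) := compat_of_approx (hs ▸ hwY.1) fun x hx => by
    obtain ⟨k, rfl⟩ := hvq (φ n) x hx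
    exact hs ▸ hn k
  exact hqp (φ n) j (hjn.trans_le hφ.le_apply) (hwq.symm.mono_right hwp)

/-- The Dirichlet–Minkowski forcing is σ-soft-linked, witnessed by the sets
`M_{s,m}`: each is leaf-linked, their union is dense, and compatible members
of `M_{s,m}` and `M_{s',m'}` with `s ⊆ s'` have a common extension in
`M_{s',m+m'}`. -/
theorem stmt17 :
    SigmaSoftLinked DMCond ∧
    (∀ (s : List ℕ) (m : ℕ), LeafLinked (DMSet s m)) ∧
    DenseSub (⋃ (s : List ℕ) (m : ℕ), DMSet s m) ∧
    ∀ (s s' : List ℕ) (m m' : ℕ), s <+: s' →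
      ∀ p ∈ DMSet s m, ∀ q ∈ DMSet s' m',
        Compat p q → ∃ r ∈ DMSet s' (m + m'), r ≤ p ∧ r ≤ q := by
  refine ⟨sigmaSoftLinked_of_countable (fun k : List ℕ × ℕ => DMSet k.1 k.2)
      (fun k => leafLinked_DMSet k.1 k.2) (fun p => ?_)
      (fun k k' => exists_DMSet_common_extension k.1 k'.1 k.2 k'.2),
    leafLinked_DMSet, fun p => ?_,
    fun _ _ _ _ hss' _ hp _ hq => exists_common_extension_of_prefix hss' hp hq⟩
  · exact ⟨p, Set.mem_iUnion.2 ⟨(p.1.1, p.1.2.card), mem_DMSet_self p⟩, le_rfl⟩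
  · exact ⟨p, Set.mem_iUnion₂.2 ⟨p.1.1, p.1.2.card, mem_DMSet_self p⟩, le_rfl⟩
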